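/- arXiv:2310.11905 — 3 statements merged into one kernel-verified Lean document; each statement's English description precedes it below -/
import Mathlib

section
/- Under the stated hypotheses, the level set {x ∈ D : g(x) = 0} has only finitely many connected components. -/
/-!
The zero set `Z = D ∩ g⁻¹{0}` is closed: a limit point of `Z` lies in `closure D` and is a zero of
`g`, so it is not on the frontier, where `g > 0`. Being bounded, `Z` is compact. At each point of
`Z` the gradient is nonzero, so the implicit function theorem straightens `Z` locally into a
segment; hence `Z` is locally connected, its components are open, and compactness leaves only
finitely many of them.
-/

open Set Topology Metric Filter

theorem IsOpen.isClosed_inter_preimage_singleton {X Y : Type*} [TopologicalSpace X]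
    [TopologicalSpace Y] [T1Space Y] {D : Set X} (hD : IsOpen D) {g : X → Y}
    (hg : ContinuousOn g (closure D)) {c : Y} (hc : ∀ x ∈ frontier D, g x ≠ c) :
    IsClosed (D ∩ g ⁻¹' {c}) := by
  have hclosure : closure D ∩ g ⁻¹' {c} = D ∩ g ⁻¹' {c} := by
    refine Subset.antisymm (fun x ⟨hxD, hgx⟩ => ⟨?_, hgx⟩)
      (inter_subset_inter_left _ subset_closure)
    by_contra hx
    exact hc x ⟨hxD, by rwa [hD.interior_eq]⟩ hgx
  exact hclosure ▸ hg.preimage_isClosed_of_isClosed isClosed_closure isClosed_singleton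

theorem locallyConnectedSpace_subtype_of_nhdsWithin {X : Type*} [TopologicalSpace X] {S : Set X}
    (h : ∀ x ∈ S, ∀ N ∈ 𝓝 x, ∃ V ∈ 𝓝[S] x, V ⊆ S ∩ N ∧ IsPreconnected V) :
    LocallyConnectedSpace S := by
  rw [locallyConnectedSpace_iff_connected_subsets]
  rintro x U hU
  rw [nhds_subtype] at hU
  obtain ⟨N, hN, hNU⟩ := hU
  obtain ⟨V, hVx, hVSN, hV⟩ := h x x.2 N hN
  refine ⟨Subtype.val ⁻¹' V, preimage_coe_mem_nhds_subtype.mpr hVx, ?_,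
    fun y hy => hNU (hVSN hy).2⟩
  rwa [← Topology.IsInducing.subtypeVal.isPreconnected_image,
    Subtype.image_preimage_coe, inter_eq_self_of_subset_right fun y hy => (hVSN hy).1]

theorem HasStrictFDerivAt.exists_isPreconnected_mem_nhdsWithin_preimage_singleton
    {E F : Type*} [NormedAddCommGroup E] [NormedSpace ℝ E] [CompleteSpace E]
    [NormedAddCommGroup F] [NormedSpace ℝ F] [FiniteDimensional ℝ F]
    {g : E → F} {g' : E →L[ℝ] F} {z : E} (hg : HasStrictFDerivAt g g' z) (hg' : g'.range = ⊤)
    {N : Set E} (hN : N ∈ 𝓝 z) :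
    ∃ V ∈ 𝓝[g ⁻¹' {g z}] z, V ⊆ g ⁻¹' {g z} ∩ N ∧ IsPreconnected V := by
  -- `φ` is a chart near `z` whose first coordinate is `g`, so fibers of `g` become flat slices.
  set φ := hg.implicitToOpenPartialHomeomorph g g' hg'
  have hφz : φ z = (g z, 0) := hg.implicitToOpenPartialHomeomorph_self hg'
  have hzsrc : z ∈ φ.source := hg.mem_implicitToOpenPartialHomeomorph_source hg'
  have hφ_fst (x : E) : (φ x).1 = g x := hg.implicitToOpenPartialHomeomorph_fst hg' x
  have hT : φ.target ∩ φ.symm ⁻¹' N ∈ 𝓝 (φ z) :=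
    inter_mem (φ.open_target.mem_nhds (φ.map_source hzsrc))
      (φ.continuousAt_symm (φ.map_source hzsrc) (by rwa [φ.left_inv hzsrc]))
  obtain ⟨ε, hε, hball⟩ := Metric.mem_nhds_iff.mp hT
  set S : Set (F × g'.ker) := {g z} ×ˢ ball 0 ε
  have hST : S ⊆ φ.target ∩ φ.symm ⁻¹' N := fun p ⟨hp₁, hp₂⟩ => hball <| by
    rw [hφz, mem_ball, Prod.dist_eq, mem_singleton_iff.mp hp₁, dist_self]
    exact max_lt hε hp₂
  refine ⟨φ.symm '' S, ?_, ?_, ?_⟩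
  · rw [φ.symm_image_eq_source_inter_preimage fun p hp => (hST hp).1, mem_nhdsWithin]
    refine ⟨φ.source ∩ φ ⁻¹' (univ ×ˢ ball 0 ε), φ.isOpen_inter_preimage
      (isOpen_univ.prod isOpen_ball), ⟨hzsrc, by simp [hφz, hε]⟩, ?_⟩
    rintro x ⟨⟨hx, -, hxε⟩, hgx⟩
    exact ⟨hx, (hφ_fst x).trans hgx, hxε⟩
  · rintro _ ⟨p, hp, rfl⟩
    refine ⟨?_, (hST hp).2⟩
    change g _ = g z
    rw [← hφ_fst, φ.right_inv (hST hp).1]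
    exact hp.1
  · exact (isPreconnected_singleton.prod (convex_ball _ _).isPreconnected).image _
      (φ.continuousOn_symm.mono fun p hp => (hST hp).1)

theorem IsOpen.locallyConnectedSpace_inter_preimage_singleton
    {E F : Type*} [NormedAddCommGroup E] [NormedSpace ℝ E] [CompleteSpace E]
    [NormedAddCommGroup F] [NormedSpace ℝ F] [FiniteDimensional ℝ F]
    {D : Set E} (hD : IsOpen D) {g : E → F} {c : F}
    (hreg : ∀ z ∈ D ∩ g ⁻¹' {c}, ∃ g' : E →L[ℝ] F, HasStrictFDerivAt g g' z ∧ g'.range = ⊤) :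
    LocallyConnectedSpace (D ∩ g ⁻¹' {c} : Set E) := by
  refine locallyConnectedSpace_subtype_of_nhdsWithin fun z ⟨hzD, hgz⟩ N hN => ?_
  obtain ⟨g', hg, hg'⟩ := hreg z ⟨hzD, hgz⟩
  obtain ⟨V, hV, hVN, hVc⟩ :=
    hg.exists_isPreconnected_mem_nhdsWithin_preimage_singleton hg'
      (inter_mem hN (hD.mem_nhds hzD))
  rw [mem_singleton_iff.mp hgz] at hV hVN
  exact ⟨V, nhdsWithin_mono _ inter_subset_right hV,
    fun x hx => ⟨⟨(hVN hx).2.2, (hVN hx).1⟩, (hVN hx).2.1⟩, hVc⟩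

theorem finitely_many_components_of_level_set_general
    (D : Set (ℝ × ℝ)) (hDo : IsOpen D) (hDb : Bornology.IsBounded D)
    (g : ℝ × ℝ → ℝ)
    (U : Set (ℝ × ℝ)) (hUo : IsOpen U) (hDU : closure D ⊆ U)
    (hg : ContDiffOn ℝ 1 g U)
    (hpos : ∀ x ∈ frontier D, 0 < g x)
    (hgrad : ∀ x ∈ D, g x = 0 → fderiv ℝ g x ≠ 0) :
    Finite (ConnectedComponents {x : ℝ × ℝ // x ∈ D ∧ g x = 0}) := by
  change Finite (ConnectedComponents (D ∩ g ⁻¹' {0} : Set (ℝ × ℝ)))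
  have hclosed : IsClosed (D ∩ g ⁻¹' {0}) :=
    hDo.isClosed_inter_preimage_singleton (hg.continuousOn.mono hDU) fun x hx => (hpos x hx).ne'
  have : CompactSpace (D ∩ g ⁻¹' {0} : Set (ℝ × ℝ)) := isCompact_iff_compactSpace.mp <|
    Metric.isCompact_of_isClosed_isBounded hclosed (hDb.subset inter_subset_left)
  have : LocallyConnectedSpace (D ∩ g ⁻¹' {0} : Set (ℝ × ℝ)) :=
    hDo.locallyConnectedSpace_inter_preimage_singleton fun z ⟨hzD, hgz⟩ =>
      ⟨fderiv ℝ g z,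
        (hg.contDiffAt (hUo.mem_nhds (hDU (subset_closure hzD)))).hasStrictFDerivAt one_ne_zero,
        Module.Dual.range_eq_top_of_ne_zero (by exact_mod_cast hgrad z hzD hgz)⟩
  infer_instance

/-- Under the stated hypotheses, the level set
`{x ∈ D : g(x) = 0}` has only finitely many connected components. -/
theorem finitely_many_components_of_level_set
    (D : Set (ℝ × ℝ)) (hDo : IsOpen D) (hDb : Bornology.IsBounded D)
    (hDc : IsConnected D)
    (g : ℝ × ℝ → ℝ)
    (U : Set (ℝ × ℝ)) (hUo : IsOpen U) (hDU : closure D ⊆ U)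
    (hg : ContDiffOn ℝ 1 g U)
    (hpos : ∀ x ∈ frontier D, 0 < g x)
    (hgrad : ∀ x ∈ D, g x = 0 → fderiv ℝ g x ≠ 0) :
    Finite (ConnectedComponents {x : ℝ × ℝ // x ∈ D ∧ g x = 0}) :=
  finitely_many_components_of_level_set_general D hDo hDb g U hUo hDU hg hpos hgrad
end

section
/- If z : ℝ → ℝ² is a continuously differentiable solution of the Hamiltonian system associated with g and x₀ which is periodic with minimal period T_g > 0, then the image z([0, T_g]) is exactly the connected component of the set {x ∈ D : g(x) = 0} containing x₀; in other words, the Hamiltonian system globally parametrizes the connected component of the level set through x₀. -/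
/-!
Along a solution `z`, `g` is conserved because the Hamiltonian field is orthogonal to `∇g`;
since `g > 0` on `∂D`, a clopen argument in time keeps the whole orbit in `{x ∈ D | g x = 0}`.
By periodicity the orbit is `z '' [0, T_g]`, hence compact and connected. It is also relatively
open in the level set: near an orbit point `p`, the map `x ↦ (⟪X_g(p), x⟫, g x)` is a local
diffeomorphism because `∇g(p) ≠ 0`, and the orbit crosses its first coordinate with speed
`‖∇g(p)‖² > 0`, so by the intermediate value theorem it fills the part of the level set near `p`.
A connected set containing `x₀` that is closed and relatively open in the level set is the
component of `x₀`.
-/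

/-- The first partial derivative of `f : ℝ × ℝ → ℝ`. -/
noncomputable def pd1 (f : ℝ × ℝ → ℝ) (x : ℝ × ℝ) : ℝ := fderiv ℝ f x (1, 0)

/-- The second partial derivative of `f : ℝ × ℝ → ℝ`. -/
noncomputable def pd2 (f : ℝ × ℝ → ℝ) (x : ℝ × ℝ) : ℝ := fderiv ℝ f x (0, 1)

open Set Filter Topology

theorem connectedComponentIn_eq_of_isPreconnected_of_isClosed {X : Type*} [TopologicalSpace X]
    {S Z : Set X} {x : X} (hZ : IsPreconnected Z) (hZc : IsClosed Z) (hZS : Z ⊆ S) (hx : x ∈ Z)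
    (hZo : ∀ y ∈ Z, Z ∈ 𝓝[S] y) : connectedComponentIn S x = Z := by
  refine subset_antisymm ?_ (hZ.subset_connectedComponentIn hx hZS)
  choose! O hOo hyO hOZ using fun y hy => mem_nhdsWithin.1 (hZo y hy)
  intro w hw
  by_contra hwZ
  have hcover : connectedComponentIn S x ⊆ (⋃ y ∈ Z, O y) ∪ Zᶜ := fun u _ => by
    by_cases hu : u ∈ Z
    · exact Or.inl (mem_biUnion hu (hyO u hu))
    · exact Or.inr hu
  obtain ⟨v, hvK, hvO, hvZ⟩ := isPreconnected_connectedComponentIn _ _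
    (isOpen_biUnion fun y hy => hOo y hy) hZc.isOpen_compl hcover
    ⟨x, mem_connectedComponentIn (hZS hx), mem_biUnion hx (hyO x hx)⟩ ⟨w, hw, hwZ⟩
  obtain ⟨y, hy, hvy⟩ := mem_iUnion₂.1 hvO
  exact hvZ (hOZ y hy ⟨hvy, connectedComponentIn_subset _ _ hvK⟩)

theorem HasDerivAt.eventually_lt_of_deriv_pos {f : ℝ → ℝ} {f' x : ℝ} (hf : HasDerivAt f f' x)
    (hf' : 0 < f') : (∀ᶠ y in 𝓝[<] x, f y < f x) ∧ ∀ᶠ y in 𝓝[>] x, f x < f y := by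
  have hslope : ∀ᶠ y in 𝓝[≠] x, 0 < slope f x y :=
    (hasDerivAt_iff_tendsto_slope.1 hf).eventually (lt_mem_nhds hf')
  constructor
  · filter_upwards [nhdsLT_le_nhdsNE x hslope, self_mem_nhdsWithin] with y hy hyx
    exact (slope_pos_iff_gt hyx).1 hy
  · filter_upwards [nhdsGT_le_nhdsNE x hslope, self_mem_nhdsWithin] with y hy hyx
    exact (slope_pos_iff hyx).1 hy

section LocalChart

variable {E F : Type*} [NormedAddCommGroup E] [NormedSpace ℝ E] [CompleteSpace E]
  [NormedAddCommGroup F] [NormedSpace ℝ F]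

theorem range_mem_nhdsWithin_of_hasStrictFDerivAt {φ : E → ℝ × F} {e : E ≃L[ℝ] ℝ × F}
    {γ : ℝ → E} {t₀ r : ℝ} (hφ : HasStrictFDerivAt φ (e : E →L[ℝ] ℝ × F) (γ t₀))
    (hγ : Continuous γ) (hlevel : ∀ t, (φ (γ t)).2 = (φ (γ t₀)).2)
    (hspeed : HasDerivAt (fun t => (φ (γ t)).1) r t₀) (hr : 0 < r) :
    range γ ∈ 𝓝[{x | (φ x).2 = (φ (γ t₀)).2}] (γ t₀) := by
  set Φ := hφ.toOpenPartialHomeomorph φ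
  have hΦ : ⇑Φ = φ := hφ.toOpenPartialHomeomorph_coe
  have hφc : ContinuousOn φ Φ.source := hΦ ▸ Φ.continuousOn
  have hsource : γ ⁻¹' Φ.source ∈ 𝓝 t₀ := hγ.continuousAt.preimage_mem_nhds
    (Φ.open_source.mem_nhds hφ.mem_toOpenPartialHomeomorph_source)
  obtain ⟨t₁, t₂, ⟨ht₁, ht₂⟩, hI⟩ := mem_nhds_iff_exists_Ioo_subset.1 hsource
  set ψ := fun t => (φ (γ t)).1
  obtain ⟨s₁, hψs₁, hs₁⟩ := ((hspeed.eventually_lt_of_deriv_pos hr).1.and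
    (Ioo_mem_nhdsLT ht₁)).exists
  obtain ⟨s₂, hψs₂, hs₂⟩ := ((hspeed.eventually_lt_of_deriv_pos hr).2.and
    (Ioo_mem_nhdsGT ht₂)).exists
  have hIcc : Icc s₁ s₂ ⊆ γ ⁻¹' Φ.source := fun t ht =>
    hI ⟨hs₁.1.trans_le ht.1, ht.2.trans_lt hs₂.2⟩
  have hψc : ContinuousOn ψ (Icc s₁ s₂) :=
    continuous_fst.comp_continuousOn (hφc.comp hγ.continuousOn hIcc)
  rw [mem_nhdsWithin]
  refine ⟨Φ.source ∩ (fun x => (φ x).1) ⁻¹' Ioo (ψ s₁) (ψ s₂),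
    (continuous_fst.comp_continuousOn hφc).isOpen_inter_preimage Φ.open_source isOpen_Ioo,
    ⟨hφ.mem_toOpenPartialHomeomorph_source, hψs₁, hψs₂⟩, ?_⟩
  rintro x ⟨⟨hxs, hxI : (φ x).1 ∈ Ioo (ψ s₁) (ψ s₂)⟩, hx⟩
  obtain ⟨t, ht, hψt⟩ :=
    intermediate_value_Icc (hs₁.2.trans hs₂.1).le hψc (Ioo_subset_Icc_self hxI)
  refine ⟨t, Φ.injOn (hIcc ht) hxs ?_⟩
  rw [hΦ]
  exact Prod.ext hψt ((hlevel t).trans hx.symm)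

end LocalChart

theorem ContinuousLinearMap.apply_eq_fst_mul_add_snd_mul (L : ℝ × ℝ →L[ℝ] ℝ) (v : ℝ × ℝ) :
    L v = v.1 * L (1, 0) + v.2 * L (0, 1) := by
  conv_lhs => rw [show v = v.1 • ((1 : ℝ), (0 : ℝ)) + v.2 • ((0 : ℝ), (1 : ℝ)) by simp]
  simp only [map_add, map_smul, smul_eq_mul]

theorem ContinuousLinearMap.sq_apply_add_sq_apply_pos {L : ℝ × ℝ →L[ℝ] ℝ} (hL : L ≠ 0) :
    0 < L (1, 0) ^ 2 + L (0, 1) ^ 2 := by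
  by_contra! h
  refine hL (ContinuousLinearMap.ext fun v => ?_)
  rw [L.apply_eq_fst_mul_add_snd_mul, show L (1, 0) = 0 by nlinarith,
    show L (0, 1) = 0 by nlinarith]
  simp

noncomputable def hamiltonianPairing (L : ℝ × ℝ →L[ℝ] ℝ) : ℝ × ℝ →L[ℝ] ℝ :=
  (-L (0, 1)) • ContinuousLinearMap.fst ℝ ℝ ℝ + L (1, 0) • ContinuousLinearMap.snd ℝ ℝ ℝ

theorem hamiltonianPairing_apply (L : ℝ × ℝ →L[ℝ] ℝ) (v : ℝ × ℝ) :
    hamiltonianPairing L v = -L (0, 1) * v.1 + L (1, 0) * v.2 :=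
  rfl

theorem injective_hamiltonianPairing_prod {L : ℝ × ℝ →L[ℝ] ℝ} (hL : L ≠ 0) :
    Function.Injective ((hamiltonianPairing L).prod L) := by
  rw [injective_iff_map_eq_zero]
  intro v hv
  have hpos := L.sq_apply_add_sq_apply_pos hL
  have h₁ : -L (0, 1) * v.1 + L (1, 0) * v.2 = 0 := congrArg Prod.fst hv
  have h₂ : v.1 * L (1, 0) + v.2 * L (0, 1) = 0 := by
    rw [← L.apply_eq_fst_mul_add_snd_mul]
    exact congrArg Prod.snd hv
  have hv₁ : (L (1, 0) ^ 2 + L (0, 1) ^ 2) * v.1 = 0 := by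
    linear_combination L (1, 0) * h₂ - L (0, 1) * h₁
  have hv₂ : (L (1, 0) ^ 2 + L (0, 1) ^ 2) * v.2 = 0 := by
    linear_combination L (0, 1) * h₂ + L (1, 0) * h₁
  exact Prod.ext ((mul_eq_zero.1 hv₁).resolve_left hpos.ne')
    ((mul_eq_zero.1 hv₂).resolve_left hpos.ne')

noncomputable def hamiltonianField (g : ℝ × ℝ → ℝ) (x : ℝ × ℝ) : ℝ × ℝ := (-pd2 g x, pd1 g x)

theorem fderiv_apply_hamiltonianField (g : ℝ × ℝ → ℝ) (x : ℝ × ℝ) :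
    fderiv ℝ g x (hamiltonianField g x) = 0 := by
  rw [ContinuousLinearMap.apply_eq_fst_mul_add_snd_mul]
  simp only [hamiltonianField, pd1, pd2]
  ring

theorem DifferentiableAt.hasDerivAt_comp_hamiltonianField {g : ℝ × ℝ → ℝ} {z : ℝ → ℝ × ℝ}
    {t : ℝ} (hg : DifferentiableAt ℝ g (z t)) (hz : HasDerivAt z (hamiltonianField g (z t)) t) :
    HasDerivAt (g ∘ z) 0 t := by
  simpa [fderiv_apply_hamiltonianField] using hg.hasFDerivAt.comp_hasDerivAt t hz

theorem hamiltonian_solution_mem_levelSet {D : Set (ℝ × ℝ)} {g : ℝ × ℝ → ℝ} {z : ℝ → ℝ × ℝ}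
    {c : ℝ} (hDo : IsOpen D) (hgd : DifferentiableOn ℝ g D) (hgc : ContinuousOn g (closure D))
    (hfront : ∀ x ∈ frontier D, g x ≠ c) (hz : ∀ t, HasDerivAt z (hamiltonianField g (z t)) t)
    (hz₀ : z 0 ∈ D) (hgz₀ : g (z 0) = c) (t : ℝ) : z t ∈ D ∧ g (z t) = c := by
  have hzc : Continuous z := continuous_iff_continuousAt.2 fun t => (hz t).continuousAt
  have hderiv : ∀ t ∈ z ⁻¹' D, HasDerivAt (g ∘ z) 0 t := fun t ht =>
    (hgd.differentiableAt (hDo.mem_nhds ht)).hasDerivAt_comp_hamiltonianField (hz t)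
  have hopen : IsOpen (z ⁻¹' D ∩ (g ∘ z) ⁻¹' {c}) :=
    (hDo.preimage hzc).isOpen_inter_preimage_of_deriv_eq_zero
      (fun t ht => (hderiv t ht).differentiableAt.differentiableWithinAt)
      (fun t ht => (hderiv t ht).deriv) _
  have hclosure : z ⁻¹' D ∩ (g ∘ z) ⁻¹' {c} = z ⁻¹' closure D ∩ (g ∘ z) ⁻¹' {c} := by
    refine subset_antisymm (inter_subset_inter_left _ (preimage_mono subset_closure)) ?_
    rintro s ⟨hsD, hsc⟩
    by_contra hs
    exact hfront _ ⟨hsD, by rw [hDo.interior_eq]; exact fun h => hs ⟨h, hsc⟩⟩ hsc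
  have hclosed : IsClosed (z ⁻¹' D ∩ (g ∘ z) ⁻¹' {c}) := hclosure ▸
    (hgc.comp hzc.continuousOn (mapsTo_preimage _ _)).preimage_isClosed_of_isClosed
      (isClosed_closure.preimage hzc) isClosed_singleton
  have huniv := IsClopen.eq_univ ⟨hclosed, hopen⟩ ⟨0, hz₀, hgz₀⟩
  exact huniv.ge (mem_univ t)

theorem hamiltonian_solution_range_mem_nhdsWithin {g : ℝ × ℝ → ℝ} {g' : ℝ × ℝ →L[ℝ] ℝ}
    {z : ℝ → ℝ × ℝ} {t₀ : ℝ} (hg : HasStrictFDerivAt g g' (z t₀)) (hg' : g' ≠ 0)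
    (hzc : Continuous z) (hz : HasDerivAt z (hamiltonianField g (z t₀)) t₀)
    (hlevel : ∀ t, g (z t) = g (z t₀)) : range z ∈ 𝓝[g ⁻¹' {g (z t₀)}] (z t₀) := by
  set ℓ := hamiltonianPairing g'
  let e : (ℝ × ℝ) ≃L[ℝ] ℝ × ℝ := (LinearEquiv.ofInjectiveEndo (ℓ.prod g' : (ℝ × ℝ) →ₗ[ℝ] ℝ × ℝ)
    (injective_hamiltonianPairing_prod hg')).toContinuousLinearEquiv
  have hφ : HasStrictFDerivAt (fun x => (ℓ x, g x)) (e : (ℝ × ℝ) →L[ℝ] ℝ × ℝ) (z t₀) :=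
    ℓ.hasStrictFDerivAt.prodMk hg
  have hX : hamiltonianField g (z t₀) = (-g' (0, 1), g' (1, 0)) := by
    simp only [hamiltonianField, pd1, pd2, hg.hasFDerivAt.fderiv]
  have hspeed : HasDerivAt (fun t => ℓ (z t)) (g' (1, 0) ^ 2 + g' (0, 1) ^ 2) t₀ := by
    have h := ℓ.hasFDerivAt.comp_hasDerivAt t₀ hz
    rw [hX, hamiltonianPairing_apply] at h
    exact h.congr_deriv (by ring)
  exact range_mem_nhdsWithin_of_hasStrictFDerivAt hφ hzc hlevel hspeed
    (g'.sq_apply_add_sq_apply_pos hg')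

theorem hamiltonian_solution_parametrizes_component_general
    (D : Set (ℝ × ℝ)) (hDo : IsOpen D)
    (g : ℝ × ℝ → ℝ)
    (U : Set (ℝ × ℝ)) (hDU : closure D ⊆ U)
    (hg : ContDiffOn ℝ 1 g U)
    (hpos : ∀ x ∈ frontier D, 0 < g x)
    (hgrad : ∀ x ∈ D, g x = 0 → fderiv ℝ g x ≠ 0)
    (x₀ : ℝ × ℝ) (hx₀ : x₀ ∈ D) (hgx₀ : g x₀ = 0)
    (Tg : ℝ) (hTg : 0 < Tg) (z : ℝ → ℝ × ℝ)
    (hz1 : ∀ t : ℝ, HasDerivAt (fun s => (z s).1) (-pd2 g (z t)) t)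
    (hz2 : ∀ t : ℝ, HasDerivAt (fun s => (z s).2) (pd1 g (z t)) t)
    (hz0 : z 0 = x₀)
    (hper : ∀ t : ℝ, z (t + Tg) = z t) :
    z '' Set.Icc 0 Tg = connectedComponentIn {x : ℝ × ℝ | x ∈ D ∧ g x = 0} x₀ := by
  have hz : ∀ t, HasDerivAt z (hamiltonianField g (z t)) t := fun t => (hz1 t).prodMk (hz2 t)
  have hzc : Continuous z := continuous_iff_continuousAt.2 fun t => (hz t).continuousAt
  have hgD : ∀ x ∈ D, ContDiffAt ℝ 1 g x := fun x hx =>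
    hg.contDiffAt (mem_of_superset (hDo.mem_nhds hx) (subset_closure.trans hDU))
  have hlevel : ∀ t, z t ∈ D ∧ g (z t) = 0 :=
    hamiltonian_solution_mem_levelSet hDo
      ((hg.differentiableOn one_ne_zero).mono (subset_closure.trans hDU))
      (hg.continuousOn.mono hDU) (fun x hx => (hpos x hx).ne') hz (hz0 ▸ hx₀) (hz0 ▸ hgx₀)
  have hrange : z '' Icc 0 Tg = range z := by
    simpa using Function.Periodic.image_Icc hper hTg 0
  rw [hrange]
  refine (connectedComponentIn_eq_of_isPreconnected_of_isClosed (isPreconnected_range hzc)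
    (hrange ▸ (isCompact_Icc.image hzc).isClosed) (range_subset_iff.2 hlevel) ⟨0, hz0⟩ ?_).symm
  rintro _ ⟨t, rfl⟩
  refine nhdsWithin_mono _ (fun x hx => hx.2.trans (hlevel t).2.symm) ?_
  exact hamiltonian_solution_range_mem_nhdsWithin
    ((hgD _ (hlevel t).1).hasStrictFDerivAt one_ne_zero) (hgrad _ (hlevel t).1 (hlevel t).2)
    hzc (hz t) fun s => (hlevel s).2.trans (hlevel t).2.symm

/-- If `z` is a `C¹`, `T_g`-periodic (with minimal period `T_g > 0`)
solution of the Hamiltonian system associated with `g` and `x₀`, then the image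
`z([0, T_g])` is exactly the connected component of `{x ∈ D : g x = 0}` containing `x₀`. -/
theorem hamiltonian_solution_parametrizes_component
    (D : Set (ℝ × ℝ)) (hDo : IsOpen D) (hDb : Bornology.IsBounded D)
    (hDc : IsConnected D)
    (g : ℝ × ℝ → ℝ)
    (U : Set (ℝ × ℝ)) (hUo : IsOpen U) (hDU : closure D ⊆ U)
    (hg : ContDiffOn ℝ 1 g U)
    (hpos : ∀ x ∈ frontier D, 0 < g x)
    (hgrad : ∀ x ∈ D, g x = 0 → fderiv ℝ g x ≠ 0)
    (x₀ : ℝ × ℝ) (hx₀ : x₀ ∈ D) (hgx₀ : g x₀ = 0)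
    (Tg : ℝ) (hTg : 0 < Tg) (z : ℝ → ℝ × ℝ) (hz : ContDiff ℝ 1 z)
    (hz1 : ∀ t : ℝ, HasDerivAt (fun s => (z s).1) (-pd2 g (z t)) t)
    (hz2 : ∀ t : ℝ, HasDerivAt (fun s => (z s).2) (pd1 g (z t)) t)
    (hz0 : z 0 = x₀)
    (hper : ∀ t : ℝ, z (t + Tg) = z t)
    (hmin : ∀ T : ℝ, 0 < T → (∀ t : ℝ, z (t + T) = z t) → Tg ≤ T) :
    z '' Set.Icc 0 Tg = connectedComponentIn {x : ℝ × ℝ | x ∈ D ∧ g x = 0} x₀ :=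
  hamiltonian_solution_parametrizes_component_general D hDo g U hDU hg hpos hgrad x₀ hx₀ hgx₀ Tg hTg
    z hz1 hz2 hz0 hper
end

section
/- Under the stated hypotheses, the topological boundary of Ω_g equals the level set {x ∈ D : g(x) = 0}. -/
/-!
By the continuity of `g` on `closure D` and its positivity on `frontier D`, the sublevel set
`S = {x ∈ D | g x ≤ 0}` is closed, while `{x ∈ D | g x < 0}` is open; hence
`frontier (interior S) ⊆ {x ∈ D | g x = 0}`. Conversely, at a zero `x` of `g` in `D` the
derivative does not vanish, so by Fermat's theorem `x` is neither a local minimum nor a local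
maximum of `g`: points of `D` with `g < 0` accumulate at `x`, and `S` is not a neighbourhood of `x`.
-/

open Filter Topology

section Sublevel

variable {X : Type*} [TopologicalSpace X] {D : Set X} {g : X → ℝ}

theorem isClosed_sep_le_zero_of_pos_on_frontier (hDo : IsOpen D)
    (hgc : ContinuousOn g (closure D)) (hpos : ∀ x ∈ frontier D, 0 < g x) :
    IsClosed {x | x ∈ D ∧ g x ≤ 0} := by
  refine isClosed_of_closure_subset fun x hx => ?_
  have hC : IsClosed (closure D ∩ g ⁻¹' Set.Iic 0) :=
    hgc.preimage_isClosed_of_isClosed isClosed_closure isClosed_Iic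
  have hsub : {x | x ∈ D ∧ g x ≤ 0} ⊆ closure D ∩ g ⁻¹' Set.Iic 0 :=
    fun _ hy => ⟨subset_closure hy.1, hy.2⟩
  obtain ⟨hxcl, hle⟩ := closure_minimal hsub hC hx
  by_cases hxD : x ∈ D
  · exact ⟨hxD, hle⟩
  · exact absurd hle (not_le.2 (hpos x (hDo.frontier_eq ▸ Set.mem_sdiff_of_mem hxcl hxD)))

theorem sep_lt_zero_subset_interior_sep_le_zero (hDo : IsOpen D) (hgc : ContinuousOn g D) :
    {x | x ∈ D ∧ g x < 0} ⊆ interior {x | x ∈ D ∧ g x ≤ 0} :=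
  interior_maximal (fun _ hx => ⟨hx.1, hx.2.le⟩) (hgc.isOpen_inter_preimage hDo isOpen_Iio)

end Sublevel

section Fermat

variable {E : Type*} [NormedAddCommGroup E] [NormedSpace ℝ E] {f : E → ℝ} {x : E}

theorem mem_closure_inter_setOf_lt_of_fderiv_ne_zero {s : Set E} (hs : s ∈ 𝓝 x)
    (hf : fderiv ℝ f x ≠ 0) : x ∈ closure (s ∩ {y | f y < f x}) := by
  have hmin : ∃ᶠ y in 𝓝 x, f y < f x := by
    simpa [IsLocalMin, IsMinFilter] using mt IsLocalMin.fderiv_eq_zero hf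
  exact mem_closure_iff_frequently.2 ((hmin.and_eventually hs).mono fun _ hy => ⟨hy.2, hy.1⟩)

theorem notMem_interior_setOf_le_of_fderiv_ne_zero (hf : fderiv ℝ f x ≠ 0) :
    x ∉ interior {y | f y ≤ f x} :=
  fun hx => hf (IsLocalMax.fderiv_eq_zero (mem_interior_iff_mem_nhds.1 hx))

end Fermat

theorem frontier_omega_eq_level_set_general
    (D : Set (ℝ × ℝ)) (hDo : IsOpen D)
    (g : ℝ × ℝ → ℝ)
    (hgc : ContinuousOn g (closure D))
    (hpos : ∀ x ∈ frontier D, 0 < g x)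
    (hgrad : ∀ x ∈ D, g x = 0 → fderiv ℝ g x ≠ 0) :
    frontier (interior {x : ℝ × ℝ | x ∈ D ∧ g x ≤ 0})
      = {x : ℝ × ℝ | x ∈ D ∧ g x = 0} := by
  have hS := isClosed_sep_le_zero_of_pos_on_frontier hDo hgc hpos
  have hU := sep_lt_zero_subset_interior_sep_le_zero hDo (hgc.mono subset_closure)
  rw [frontier, interior_interior]
  ext x
  constructor
  · rintro ⟨hcl, hint⟩
    obtain ⟨hxD, hle⟩ := hS.closure_subset (closure_mono interior_subset hcl)
    exact ⟨hxD, le_antisymm hle (not_lt.1 fun hlt => hint (hU ⟨hxD, hlt⟩))⟩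
  · rintro ⟨hxD, hx0⟩
    have hne := hgrad x hxD hx0
    refine ⟨closure_mono hU ?_, fun hx => notMem_interior_setOf_le_of_fderiv_ne_zero hne
      (interior_mono (fun y hy => hx0 ▸ hy.2) hx)⟩
    have hx := mem_closure_inter_setOf_lt_of_fderiv_ne_zero (hDo.mem_nhds hxD) hne
    rwa [hx0] at hx

/-- Under the stated hypotheses, the topological boundary of
`Ω_g = int {x ∈ D : g x ≤ 0}` equals the level set `{x ∈ D : g x = 0}`. -/
theorem frontier_omega_eq_level_set
    (D : Set (ℝ × ℝ)) (hDo : IsOpen D) (hDb : Bornology.IsBounded D)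
    (g : ℝ × ℝ → ℝ)
    (hgc : ContinuousOn g (closure D)) (hg : ContDiffOn ℝ 1 g D)
    (hpos : ∀ x ∈ frontier D, 0 < g x)
    (hgrad : ∀ x ∈ D, g x = 0 → fderiv ℝ g x ≠ 0) :
    frontier (interior {x : ℝ × ℝ | x ∈ D ∧ g x ≤ 0})
      = {x : ℝ × ℝ | x ∈ D ∧ g x = 0} :=
  frontier_omega_eq_level_set_general D hDo g hgc hpos hgrad
end
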